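/- arXiv:2105.09774 — 6 statements merged into one kernel-verified Lean document; each statement's English description precedes it below -/
import Mathlib

section
/- Let n, k be integers with 1 ≤ k < 2k ≤ n and (n+1)/3 ≤ k ≤ n/2. Then D_{n+1,k,2k}(L,l,d,r,R) = ∏_{j=0}^{n−2k} (d_j·d_{j+k}·d_{j+2k} − d_j·l_{j+k}·r_{j+k} − L_j·R_j·d_{j+k} − l_j·r_j·d_{j+2k} + l_j·R_j·l_{j+k} + r_j·L_j·r_{j+k}) · ∏_{j=n+1−2k}^{k−1} (d_j·d_{j+k} − l_j·r_j). -/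
/-- Entry function of a `k,2k`-pentadiagonal matrix: the `(i,j)` entry equals `L j` if
`i = j + 2k`, `l j` if `i = j + k`, `d i` if `i = j`, `r i` if `j = i + k`, `R i` if
`j = i + 2k`, and `0` otherwise. -/
def pentaFun (k : ℕ) (L l d r R : ℕ → ℂ) (i j : ℕ) : ℂ :=
  if j + 2 * k = i then L j
  else if j + k = i then l j
  else if i = j then d i
  else if i + k = j then r i
  else if i + 2 * k = j then R i
  else 0

/-- The `m × m` `k,2k`-pentadiagonal matrix `A_{m,k,2k}(L,l,d,r,R)`. -/
def pentaMat (m k : ℕ) (L l d r R : ℕ → ℂ) : Matrix (Fin m) (Fin m) ℂ :=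
  Matrix.of fun i j => pentaFun k L l d r R i j

section PentaAux

set_option linter.unreachableTactic false
set_option linter.unusedTactic false

lemma pf_self {k : ℕ} (L l d r R : ℕ → ℂ) (hk : 1 ≤ k) (a : ℕ) :
    pentaFun k L l d r R a a = d a := by
  unfold pentaFun; split_ifs <;> first | rfl | omega

lemma pf_r {k : ℕ} (L l d r R : ℕ → ℂ) (hk : 1 ≤ k) (a : ℕ) :
    pentaFun k L l d r R a (a + k) = r a := by
  unfold pentaFun; split_ifs <;> first | rfl | omega

lemma pf_R {k : ℕ} (L l d r R : ℕ → ℂ) (hk : 1 ≤ k) (a : ℕ) :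
    pentaFun k L l d r R a (a + 2 * k) = R a := by
  unfold pentaFun; split_ifs <;> first | rfl | omega

lemma pf_l {k : ℕ} (L l d r R : ℕ → ℂ) (hk : 1 ≤ k) (a : ℕ) :
    pentaFun k L l d r R (a + k) a = l a := by
  unfold pentaFun; split_ifs <;> first | rfl | omega

lemma pf_L {k : ℕ} (L l d r R : ℕ → ℂ) (hk : 1 ≤ k) (a : ℕ) :
    pentaFun k L l d r R (a + 2 * k) a = L a := by
  unfold pentaFun; split_ifs <;> first | rfl | omega

lemma pf_l2 {k : ℕ} (L l d r R : ℕ → ℂ) (hk : 1 ≤ k) (a : ℕ) :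
    pentaFun k L l d r R (a + 2 * k) (a + k) = l (a + k) := by
  unfold pentaFun; split_ifs <;> first | rfl | omega

lemma pf_r2 {k : ℕ} (L l d r R : ℕ → ℂ) (hk : 1 ≤ k) (a : ℕ) :
    pentaFun k L l d r R (a + k) (a + 2 * k) = r (a + k) := by
  unfold pentaFun; split_ifs <;> first | rfl | omega

lemma pf_off {k : ℕ} (L l d r R : ℕ → ℂ) {c c' a b : ℕ} (hc : c < k) (hc' : c' < k)
    (hne : c ≠ c') (ha : a ≤ 2) (hb : b ≤ 2) :
    pentaFun k L l d r R (c + a * k) (c' + b * k) = 0 := by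
  interval_cases a <;> interval_cases b <;>
    (unfold pentaFun; split_ifs <;> first | rfl | omega)

/-- The `c`-th residue block of the pentadiagonal matrix, padded to a `3 × 3` matrix
by diagonal units. -/
def pentaBlock (n k : ℕ) (L l d r R : ℕ → ℂ) (c : Fin k) : Matrix (Fin 3) (Fin 3) ℂ :=
  Matrix.of fun i j =>
    if (c : ℕ) + (i : ℕ) * k ≤ n ∧ (c : ℕ) + (j : ℕ) * k ≤ n then
      pentaFun k L l d r R ((c : ℕ) + (i : ℕ) * k) ((c : ℕ) + (j : ℕ) * k)
    else if i = j then 1 else 0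

/-- Division-with-remainder equivalence `Fin (3k) ≃ Fin 3 × Fin k`. -/
def divmodEquiv (k : ℕ) (hk : 0 < k) : Fin (3 * k) ≃ Fin 3 × Fin k where
  toFun j := (⟨(j : ℕ) / k, (Nat.div_lt_iff_lt_mul hk).2 j.isLt⟩, ⟨(j : ℕ) % k, Nat.mod_lt _ hk⟩)
  invFun p := ⟨(p.1 : ℕ) * k + (p.2 : ℕ), by
    have h1 : (p.1 : ℕ) ≤ 2 := Nat.lt_succ_iff.mp p.1.isLt
    have h2 := p.2.isLt
    calc (p.1 : ℕ) * k + (p.2 : ℕ) < (p.1 : ℕ) * k + k := by omega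
      _ = ((p.1 : ℕ) + 1) * k := by ring
      _ ≤ 3 * k := Nat.mul_le_mul_right _ (by omega)⟩
  left_inv j := by
    apply Fin.ext
    show (j : ℕ) / k * k + (j : ℕ) % k = (j : ℕ)
    rw [mul_comm]
    exact Nat.div_add_mod _ _
  right_inv p := by
    have h2 := p.2.isLt
    refine Prod.ext (Fin.ext ?_) (Fin.ext ?_)
    · show ((p.1 : ℕ) * k + (p.2 : ℕ)) / k = (p.1 : ℕ)
      rw [mul_comm, Nat.mul_add_div hk, Nat.div_eq_of_lt h2, add_zero]
    · show ((p.1 : ℕ) * k + (p.2 : ℕ)) % k = (p.2 : ℕ)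
      rw [add_comm, Nat.add_mul_mod_self_right, Nat.mod_eq_of_lt h2]

lemma blockdiag_eval (n k : ℕ) (hk : 0 < k) (L l d r R : ℕ → ℂ)
    (j1 j2 : ℕ) (h1 : j1 < 3 * k) (h2 : j2 < 3 * k) :
    Matrix.blockDiagonal (pentaBlock n k L l d r R)
      (divmodEquiv k hk ⟨j1, h1⟩) (divmodEquiv k hk ⟨j2, h2⟩) =
      if j1 ≤ n ∧ j2 ≤ n then pentaFun k L l d r R j1 j2
      else if j1 = j2 then 1 else 0 := by
  have f1 : j1 % k + j1 / k * k = j1 := Nat.mod_add_div' j1 k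
  have f2 : j2 % k + j2 / k * k = j2 := Nat.mod_add_div' j2 k
  have hq1 : j1 / k < 3 := (Nat.div_lt_iff_lt_mul hk).2 h1
  have hq2 : j2 / k < 3 := (Nat.div_lt_iff_lt_mul hk).2 h2
  have hc1 : j1 % k < k := Nat.mod_lt _ hk
  have hc2 : j2 % k < k := Nat.mod_lt _ hk
  rw [Matrix.blockDiagonal_apply]
  simp only [divmodEquiv, Equiv.coe_fn_mk]
  by_cases hcc : j1 % k = j2 % k
  · refine (if_pos (Fin.ext hcc : (⟨j1 % k, hc1⟩ : Fin k) = ⟨j2 % k, hc2⟩)).trans ?_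
    have f2' : j1 % k + j2 / k * k = j2 := by rw [hcc]; exact f2
    dsimp [pentaBlock]
    rw [f1, f2']
    by_cases hn : j1 ≤ n ∧ j2 ≤ n
    · rw [if_pos hn, if_pos hn]
    · rw [if_neg hn, if_neg hn]
      have hiff : ((⟨j1 / k, hq1⟩ : Fin 3) = ⟨j2 / k, hq2⟩) ↔ j1 = j2 := by
        rw [Fin.mk.injEq]
        constructor
        · intro h; rw [← f1, ← f2', h]
        · intro h; rw [h]
      rw [if_congr hiff rfl rfl]
  · refine (if_neg (fun h : (⟨j1 % k, hc1⟩ : Fin k) = ⟨j2 % k, hc2⟩ => hcc (congrArg Fin.val h))).trans ?_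
    have hne : j1 ≠ j2 := fun h => hcc (by rw [h])
    by_cases hn : j1 ≤ n ∧ j2 ≤ n
    · rw [if_pos hn, ← f1, ← f2]
      exact (pf_off L l d r R hc1 hc2 hcc (by omega) (by omega)).symm
    · rw [if_neg hn, if_neg hne]

lemma det_pentaBlock (n k : ℕ) (hk : 1 ≤ k) (h2k : 2 * k ≤ n) (L l d r R : ℕ → ℂ)
    (c : Fin k) :
    (pentaBlock n k L l d r R c).det =
      if (c : ℕ) + 2 * k ≤ n then
        (d c * d (c + k) * d (c + 2 * k) - d c * l (c + k) * r (c + k)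
          - L c * R c * d (c + k) - l c * r c * d (c + 2 * k)
          + l c * R c * l (c + k) + r c * L c * r (c + k))
      else (d c * d (c + k) - l c * r c) := by
  have hck : (c : ℕ) < k := c.isLt
  have hsimp : ∀ (i j : Fin 3),
      pentaBlock n k L l d r R c i j =
      (if (c : ℕ) + (i : ℕ) * k ≤ n ∧ (c : ℕ) + (j : ℕ) * k ≤ n then
        pentaFun k L l d r R ((c : ℕ) + (i : ℕ) * k) ((c : ℕ) + (j : ℕ) * k)
      else if i = j then 1 else 0) := fun i j => rfl
  by_cases h : (c : ℕ) + 2 * k ≤ n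
  · rw [if_pos h]
    have h00 : pentaBlock n k L l d r R c 0 0 = d c := by
      rw [hsimp]; norm_num; rw [if_pos (by omega)]; exact pf_self L l d r R hk c
    have h01 : pentaBlock n k L l d r R c 0 1 = r c := by
      rw [hsimp]; norm_num; rw [if_pos (by omega)]; exact pf_r L l d r R hk c
    have h02 : pentaBlock n k L l d r R c 0 2 = R c := by
      rw [hsimp]; norm_num; rw [if_pos (by omega)]; exact pf_R L l d r R hk c
    have h10 : pentaBlock n k L l d r R c 1 0 = l c := by
      rw [hsimp]; norm_num; rw [if_pos (by omega)]; exact pf_l L l d r R hk c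
    have h11 : pentaBlock n k L l d r R c 1 1 = d ((c : ℕ) + k) := by
      rw [hsimp]; norm_num; rw [if_pos (by omega)]; exact pf_self L l d r R hk _
    have h12 : pentaBlock n k L l d r R c 1 2 = r ((c : ℕ) + k) := by
      rw [hsimp]; norm_num; rw [if_pos (by omega)]; exact pf_r2 L l d r R hk c
    have h20 : pentaBlock n k L l d r R c 2 0 = L c := by
      rw [hsimp]; norm_num; rw [if_pos (by omega)]; exact pf_L L l d r R hk c
    have h21 : pentaBlock n k L l d r R c 2 1 = l ((c : ℕ) + k) := by
      rw [hsimp]; norm_num; rw [if_pos (by omega)]; exact pf_l2 L l d r R hk c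
    have h22 : pentaBlock n k L l d r R c 2 2 = d ((c : ℕ) + 2 * k) := by
      rw [hsimp]; norm_num; rw [if_pos (by omega)]; exact pf_self L l d r R hk _
    rw [Matrix.det_fin_three, h00, h01, h02, h10, h11, h12, h20, h21, h22]
    ring
  · rw [if_neg h]
    have h00 : pentaBlock n k L l d r R c 0 0 = d c := by
      rw [hsimp]; norm_num; rw [if_pos (by omega)]; exact pf_self L l d r R hk c
    have h01 : pentaBlock n k L l d r R c 0 1 = r c := by
      rw [hsimp]; norm_num; rw [if_pos (by omega)]; exact pf_r L l d r R hk c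
    have h02 : pentaBlock n k L l d r R c 0 2 = 0 := by
      rw [hsimp]; norm_num; split_ifs <;> first | rfl | omega | simp_all
    have h10 : pentaBlock n k L l d r R c 1 0 = l c := by
      rw [hsimp]; norm_num; rw [if_pos (by omega)]; exact pf_l L l d r R hk c
    have h11 : pentaBlock n k L l d r R c 1 1 = d ((c : ℕ) + k) := by
      rw [hsimp]; norm_num; rw [if_pos (by omega)]; exact pf_self L l d r R hk _
    have h12 : pentaBlock n k L l d r R c 1 2 = 0 := by
      rw [hsimp]; norm_num; split_ifs <;> first | rfl | omega | simp_all
    have h20 : pentaBlock n k L l d r R c 2 0 = 0 := by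
      rw [hsimp]; norm_num; split_ifs <;> first | rfl | omega | simp_all
    have h21 : pentaBlock n k L l d r R c 2 1 = 0 := by
      rw [hsimp]; norm_num; split_ifs <;> first | rfl | omega | simp_all
    have h22 : pentaBlock n k L l d r R c 2 2 = 1 := by
      rw [hsimp]; norm_num; intro h'; omega
    rw [Matrix.det_fin_three, h00, h01, h02, h10, h11, h12, h20, h21, h22]
    ring

end PentaAux

/-- Theorem 1: for `(n+1)/3 ≤ k ≤ n/2` the determinant of the general `k,2k`-pentadiagonal
matrix is the stated product. -/
theorem det_penta_middle_range (n k : ℕ) (hk : 1 ≤ k) (h2k : 2 * k ≤ n)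
    (h3k : n + 1 ≤ 3 * k) (L l d r R : ℕ → ℂ) :
    (pentaMat (n + 1) k L l d r R).det =
      (∏ j ∈ Finset.range (n - 2 * k + 1),
        (d j * d (j + k) * d (j + 2 * k) - d j * l (j + k) * r (j + k)
          - L j * R j * d (j + k) - l j * r j * d (j + 2 * k)
          + l j * R j * l (j + k) + r j * L j * r (j + k))) *
      ∏ j ∈ Finset.Ico (n + 1 - 2 * k) k, (d j * d (j + k) - l j * r j) := by
  classical
  have hk0 : 0 < k := hk
  have hpk : (n + 1) + (3 * k - (n + 1)) = 3 * k := by omega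
  set p := 3 * k - (n + 1) with hp
  set e : Fin (n + 1) ⊕ Fin p ≃ Fin 3 × Fin k :=
    (finSumFinEquiv.trans (finCongr hpk)).trans (divmodEquiv k hk0) with he
  have he1 : ∀ i : Fin (n + 1),
      e (Sum.inl i) = divmodEquiv k hk0 ⟨(i : ℕ), by have := i.isLt; omega⟩ := by
    intro i
    show divmodEquiv k hk0 (finCongr hpk (finSumFinEquiv (Sum.inl i))) = _
    congr 1
  have he2 : ∀ t : Fin p,
      e (Sum.inr t) = divmodEquiv k hk0 ⟨n + 1 + (t : ℕ), by have := t.isLt; omega⟩ := by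
    intro t
    show divmodEquiv k hk0 (finCongr hpk (finSumFinEquiv (Sum.inr t))) = _
    congr 1
  have key : (Matrix.blockDiagonal (pentaBlock n k L l d r R)).submatrix e e =
      Matrix.fromBlocks (pentaMat (n + 1) k L l d r R) 0 0
        (1 : Matrix (Fin p) (Fin p) ℂ) := by
    ext i j
    rcases i with i | i <;> rcases j with j | j <;>
      simp only [Matrix.submatrix_apply]
    · rw [he1 i, he1 j, blockdiag_eval n k hk0 L l d r R _ _ _ _,
        if_pos ⟨Nat.lt_succ_iff.mp i.isLt, Nat.lt_succ_iff.mp j.isLt⟩]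
      rfl
    · rw [he1 i, he2 j, blockdiag_eval n k hk0 L l d r R _ _ _ _,
        if_neg (by have := i.isLt; omega), if_neg (by have := i.isLt; omega)]
      rfl
    · rw [he2 i, he1 j, blockdiag_eval n k hk0 L l d r R _ _ _ _,
        if_neg (by have := j.isLt; omega), if_neg (by have := j.isLt; omega)]
      rfl
    · rw [he2 i, he2 j, blockdiag_eval n k hk0 L l d r R _ _ _ _,
        if_neg (by omega)]
      rw [Matrix.fromBlocks_apply₂₂, Matrix.one_apply]
      have hiff : (n + 1 + (i : ℕ) = n + 1 + (j : ℕ)) ↔ i = j := by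
        rw [Fin.ext_iff]; omega
      rw [if_congr hiff rfl rfl]
  have hdet := Matrix.det_submatrix_equiv_self e
    (Matrix.blockDiagonal (pentaBlock n k L l d r R))
  rw [key, Matrix.det_fromBlocks_zero₂₁, Matrix.det_one, mul_one] at hdet
  rw [hdet, Matrix.det_blockDiagonal]
  have hstep : ∀ c : Fin k, (pentaBlock n k L l d r R c).det =
      (fun j : ℕ => if j + 2 * k ≤ n then
        (d j * d (j + k) * d (j + 2 * k) - d j * l (j + k) * r (j + k)
          - L j * R j * d (j + k) - l j * r j * d (j + 2 * k)
          + l j * R j * l (j + k) + r j * L j * r (j + k))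
      else (d j * d (j + k) - l j * r j)) (c : ℕ) :=
    fun c => det_pentaBlock n k hk h2k L l d r R c
  rw [Finset.prod_congr rfl fun c _ => hstep c,
    Fin.prod_univ_eq_prod_range (fun j : ℕ => if j + 2 * k ≤ n then
        (d j * d (j + k) * d (j + 2 * k) - d j * l (j + k) * r (j + k)
          - L j * R j * d (j + k) - l j * r j * d (j + 2 * k)
          + l j * R j * l (j + k) + r j * L j * r (j + k))
      else (d j * d (j + k) - l j * r j)) k]
  have hle : n - 2 * k + 1 ≤ k := by omega
  have h21 : n + 1 - 2 * k = n - 2 * k + 1 := by omega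
  rw [Finset.range_eq_Ico,
    ← Finset.prod_Ico_consecutive _ (Nat.zero_le (n - 2 * k + 1)) hle, h21]
  congr 1
  · rw [← Finset.range_eq_Ico]
    refine Finset.prod_congr rfl fun j hj => ?_
    rw [Finset.mem_range] at hj
    rw [if_pos (by omega)]
  · refine Finset.prod_congr rfl fun j hj => ?_
    rw [Finset.mem_Ico] at hj
    rw [if_neg (by omega)]
end

section
/- Let n, k be integers with 1 ≤ k < 2k ≤ n and n+1 = 3k+p where 0 ≤ p < k. Then D_{n+1,k,2k}(L,l,d,r,R) = ∏_{j=0}^{p−1} M_{n,k,j} · ∏_{j=p}^{k−1} N_{n,k,j}, where M_{n,k,j} = d_j d_{j+k} d_{j+2k} d_{j+3k} − d_j d_{j+k} l_{j+2k} r_{j+2k} − d_j d_{j+2k} L_{j+k} R_{j+k} − d_j d_{j+3k} l_{j+k} r_{j+k} − d_{j+k} d_{j+3k} L_j R_j − d_{j+2k} d_{j+3k} l_j r_j + d_j L_{j+k} r_{j+k} r_{j+2k} + d_j R_{j+k} l_{j+k} l_{j+2k} + d_{j+3k} L_j r_j r_{j+k} + d_{j+3k} R_j l_j l_{j+k} +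 L_j L_{j+k} R_j R_{j+k} − L_j R_{j+k} l_{j+2k} r_j − L_{j+k} R_j l_j r_{j+2k} + l_j l_{j+2k} r_j r_{j+2k}, and N_{n,k,j} = d_j d_{j+k} d_{j+2k} − d_{j+2k} l_j r_j − d_{j+k} L_j R_j − d_j l_{j+k} r_{j+k} + R_j l_j l_{j+k} + L_j r_j r_{j+k}. -/
lemma pentaFun_zero_of_ne {k a b : ℕ} (ha : a < k) (hb : b < k) (hab : a ≠ b)
    (L l d r R : ℕ → ℂ) (s t : ℕ) :
    pentaFun k L l d r R (a + s * k) (b + t * k) = 0 := by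
  have key : ∀ u v : ℕ, a + u * k ≠ b + v * k := by
    intro u v h
    have := congrArg (· % k) h
    simp only [Nat.add_mul_mod_self_right, Nat.mod_eq_of_lt ha, Nat.mod_eq_of_lt hb] at this
    exact hab this
  have key' : ∀ u v : ℕ, b + u * k ≠ a + v * k := by
    intro u v h; exact (key v u h.symm)
  unfold pentaFun
  rw [if_neg, if_neg, if_neg, if_neg, if_neg]
  · rw [show a + s * k + 2 * k = a + (s + 2) * k by ring]; exact key _ _
  · rw [show a + s * k + k = a + (s + 1) * k by ring]; exact key _ _
  · exact key _ _
  · rw [show b + t * k + k = b + (t + 1) * k by ring]; exact key' _ _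
  · rw [show b + t * k + 2 * k = b + (t + 2) * k by ring]; exact key' _ _

lemma pentaFun_shift {k : ℕ} (hk : 0 < k) (L l d r R : ℕ → ℂ) (a s t : ℕ) :
    pentaFun k L l d r R (a + s * k) (a + t * k) =
      if t + 2 = s then L (a + t * k)
      else if t + 1 = s then l (a + t * k)
      else if s = t then d (a + s * k)
      else if s + 1 = t then r (a + s * k)
      else if s + 2 = t then R (a + s * k)
      else 0 := by
  have cancel : ∀ u v : ℕ, (a + u * k = a + v * k) ↔ u = v := by
    intro u v
    constructor
    · intro h; exact Nat.eq_of_mul_eq_mul_right hk (by omega)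
    · rintro rfl; rfl
  unfold pentaFun
  rw [show a + t * k + 2 * k = a + (t + 2) * k by ring,
      show a + t * k + k = a + (t + 1) * k by ring,
      show a + s * k + k = a + (s + 1) * k by ring,
      show a + s * k + 2 * k = a + (s + 2) * k by ring]
  simp only [cancel]

lemma shift_inj {k a b s t : ℕ} (hk : 0 < k) (ha : a < k) (hb : b < k)
    (h : a + s * k = b + t * k) : a = b ∧ s = t := by
  have hab : a = b := by
    have := congrArg (· % k) h
    simpa [Nat.add_mul_mod_self_right, Nat.mod_eq_of_lt ha, Nat.mod_eq_of_lt hb] using this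
  subst hab
  exact ⟨rfl, Nat.eq_of_mul_eq_mul_right hk (by omega)⟩

/-- 4×4 block. -/
def blk4 (k : ℕ) (L l d r R : ℕ → ℂ) (j : ℕ) : Matrix (Fin 4) (Fin 4) ℂ :=
  Matrix.of fun i i' => pentaFun k L l d r R (j + (i : ℕ) * k) (j + (i' : ℕ) * k)

/-- 3×3 block. -/
def blk3 (k : ℕ) (L l d r R : ℕ → ℂ) (j : ℕ) : Matrix (Fin 3) (Fin 3) ℂ :=
  Matrix.of fun i i' => pentaFun k L l d r R (j + (i : ℕ) * k) (j + (i' : ℕ) * k)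

lemma blk4_eq {k : ℕ} (hk : 0 < k) (L l d r R : ℕ → ℂ) (j : ℕ) :
    blk4 k L l d r R j =
      !![d j, r j, R j, 0;
         l j, d (j + k), r (j + k), R (j + k);
         L j, l (j + k), d (j + 2 * k), r (j + 2 * k);
         0, L (j + k), l (j + 2 * k), d (j + 3 * k)] := by
  ext i i'
  fin_cases i <;> fin_cases i' <;>
    simp [blk4, pentaFun_shift hk, show ((2:Fin 4):ℕ) = 2 from rfl,
      show ((3:Fin 4):ℕ) = 3 from rfl]

lemma blk3_eq {k : ℕ} (hk : 0 < k) (L l d r R : ℕ → ℂ) (j : ℕ) :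
    blk3 k L l d r R j =
      !![d j, r j, R j;
         l j, d (j + k), r (j + k);
         L j, l (j + k), d (j + 2 * k)] := by
  ext i i'
  fin_cases i <;> fin_cases i' <;>
    simp [blk3, pentaFun_shift hk, show ((2:Fin 3):ℕ) = 2 from rfl]

lemma det_blk4 {k : ℕ} (hk : 0 < k) (L l d r R : ℕ → ℂ) (j : ℕ) :
    (blk4 k L l d r R j).det =
      d j * d (j + k) * d (j + 2 * k) * d (j + 3 * k)
        - d j * d (j + k) * l (j + 2 * k) * r (j + 2 * k)
        - d j * d (j + 2 * k) * L (j + k) * R (j + k)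
        - d j * d (j + 3 * k) * l (j + k) * r (j + k)
        - d (j + k) * d (j + 3 * k) * L j * R j
        - d (j + 2 * k) * d (j + 3 * k) * l j * r j
        + d j * L (j + k) * r (j + k) * r (j + 2 * k)
        + d j * R (j + k) * l (j + k) * l (j + 2 * k)
        + d (j + 3 * k) * L j * r j * r (j + k)
        + d (j + 3 * k) * R j * l j * l (j + k)
        + L j * L (j + k) * R j * R (j + k)
        - L j * R (j + k) * l (j + 2 * k) * r j
        - L (j + k) * R j * l j * r (j + 2 * k)
        + l j * l (j + 2 * k) * r j * r (j + 2 * k) := by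
  rw [blk4_eq hk]
  simp [Matrix.det_succ_row_zero, Fin.sum_univ_succ, Fin.succAbove]
  ring

lemma det_blk3 {k : ℕ} (hk : 0 < k) (L l d r R : ℕ → ℂ) (j : ℕ) :
    (blk3 k L l d r R j).det =
      d j * d (j + k) * d (j + 2 * k) - d (j + 2 * k) * l j * r j
        - d (j + k) * L j * R j - d j * l (j + k) * r (j + k)
        + R j * l j * l (j + k) + L j * r j * r (j + k) := by
  rw [blk3_eq hk, Matrix.det_fin_three]
  simp
  ring

/-- Theorem 6: for `n + 1 = 3k + p`, `0 ≤ p < k`, the determinant of the general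
`k,2k`-pentadiagonal matrix is `∏_{j=0}^{p-1} M_{n,k,j} ⬝ ∏_{j=p}^{k-1} N_{n,k,j}`. -/
theorem det_penta_q_eq_three (n k p : ℕ) (hk : 1 ≤ k) (h2k : 2 * k ≤ n)
    (hnp : n + 1 = 3 * k + p) (hpk : p < k) (L l d r R : ℕ → ℂ) :
    (pentaMat (n + 1) k L l d r R).det =
      (∏ j ∈ Finset.range p,
        (d j * d (j + k) * d (j + 2 * k) * d (j + 3 * k)
          - d j * d (j + k) * l (j + 2 * k) * r (j + 2 * k)
          - d j * d (j + 2 * k) * L (j + k) * R (j + k)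
          - d j * d (j + 3 * k) * l (j + k) * r (j + k)
          - d (j + k) * d (j + 3 * k) * L j * R j
          - d (j + 2 * k) * d (j + 3 * k) * l j * r j
          + d j * L (j + k) * r (j + k) * r (j + 2 * k)
          + d j * R (j + k) * l (j + k) * l (j + 2 * k)
          + d (j + 3 * k) * L j * r j * r (j + k)
          + d (j + 3 * k) * R j * l j * l (j + k)
          + L j * L (j + k) * R j * R (j + k)
          - L j * R (j + k) * l (j + 2 * k) * r j
          - L (j + k) * R j * l j * r (j + 2 * k)
          + l j * l (j + 2 * k) * r j * r (j + 2 * k))) *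
      ∏ j ∈ Finset.Ico p k,
        (d j * d (j + k) * d (j + 2 * k) - d (j + 2 * k) * l j * r j
          - d (j + k) * L j * R j - d j * l (j + k) * r (j + k)
          + R j * l j * l (j + k) + L j * r j * r (j + k)) := by
  have hk0 : 0 < k := hk
  -- the map from block coordinates to matrix indices
  set f : (Fin 4 × Fin p) ⊕ (Fin 3 × Fin (k - p)) → Fin (n + 1) :=
    Sum.elim
      (fun x => ⟨(x.2 : ℕ) + (x.1 : ℕ) * k, by
        have h1 := x.1.isLt
        have h2 := x.2.isLt
        have h3 : (x.1 : ℕ) * k ≤ 3 * k := Nat.mul_le_mul_right k (by omega)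
        omega⟩)
      (fun x => ⟨p + (x.2 : ℕ) + (x.1 : ℕ) * k, by
        have h1 := x.1.isLt
        have h2 := x.2.isLt
        have h3 : (x.1 : ℕ) * k ≤ 2 * k := Nat.mul_le_mul_right k (by omega)
        omega⟩) with hf
  have hinj : Function.Injective f := by
    rintro (⟨i, j⟩ | ⟨i, j⟩) (⟨i', j'⟩ | ⟨i', j'⟩) h <;>
      simp only [hf, Sum.elim_inl, Sum.elim_inr, Fin.mk.injEq] at h
    · obtain ⟨h1, h2⟩ := shift_inj hk0 (lt_trans j.isLt hpk) (lt_trans j'.isLt hpk) h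
      simp only [Sum.inl.injEq, Prod.mk.injEq, Fin.ext_iff]
      exact ⟨h2, h1⟩
    · obtain ⟨h1, h2⟩ := shift_inj hk0 (lt_trans j.isLt hpk)
        (by have := j'.isLt; omega) h
      have := j.isLt; omega
    · obtain ⟨h1, h2⟩ := shift_inj hk0 (by have := j.isLt; omega)
        (lt_trans j'.isLt hpk) h
      have := j'.isLt; omega
    · obtain ⟨h1, h2⟩ := shift_inj hk0 (by have := j.isLt; omega)
        (by have := j'.isLt; omega) h
      simp only [Sum.inr.injEq, Prod.mk.injEq, Fin.ext_iff]
      exact ⟨h2, by omega⟩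
  have hbij : Function.Bijective f :=
    (Fintype.bijective_iff_injective_and_card f).mpr ⟨hinj, by
      simp only [Fintype.card_sum, Fintype.card_prod, Fintype.card_fin]; omega⟩
  set e : (Fin 4 × Fin p) ⊕ (Fin 3 × Fin (k - p)) ≃ Fin (n + 1) :=
    Equiv.ofBijective f hbij with he
  have hsub : (pentaMat (n + 1) k L l d r R).submatrix e e =
      Matrix.fromBlocks
        (Matrix.blockDiagonal fun j : Fin p => blk4 k L l d r R j)
        0 0
        (Matrix.blockDiagonal fun j : Fin (k - p) => blk3 k L l d r R (p + j)) := by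
    ext x y
    have happ : ∀ z, e z = f z := fun z => rfl
    rcases x with ⟨i, j⟩ | ⟨i, j⟩ <;> rcases y with ⟨i', j'⟩ | ⟨i', j'⟩ <;>
      simp only [Matrix.submatrix_apply, happ, hf, Sum.elim_inl, Sum.elim_inr,
        Matrix.fromBlocks_apply₁₁, Matrix.fromBlocks_apply₁₂,
        Matrix.fromBlocks_apply₂₁, Matrix.fromBlocks_apply₂₂,
        Matrix.blockDiagonal_apply, pentaMat, Matrix.of_apply,
        Matrix.zero_apply]
    · rcases eq_or_ne j j' with rfl | hne
      · simp [blk4]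
      · rw [if_neg hne]
        exact pentaFun_zero_of_ne (lt_trans j.isLt hpk) (lt_trans j'.isLt hpk)
          (fun h => hne (Fin.ext h)) L l d r R _ _
    · exact pentaFun_zero_of_ne (lt_trans j.isLt hpk)
        (by have := j'.isLt; omega) (by have := j'.isLt; omega) L l d r R _ _
    · exact pentaFun_zero_of_ne (by have := j.isLt; omega)
        (lt_trans j'.isLt hpk) (by have := j.isLt; omega) L l d r R _ _
    · rcases eq_or_ne j j' with rfl | hne
      · simp [blk3]
      · rw [if_neg hne]
        exact pentaFun_zero_of_ne (by have := j.isLt; omega)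
          (by have := j'.isLt; omega)
          (by have h := fun h : (j:ℕ) = j' => hne (Fin.ext h); omega) L l d r R _ _
  rw [← Matrix.det_submatrix_equiv_self e, hsub, Matrix.det_fromBlocks_zero₂₁,
    Matrix.det_blockDiagonal, Matrix.det_blockDiagonal]
  congr 1
  · rw [← Fin.prod_univ_eq_prod_range]
    exact Finset.prod_congr rfl fun j _ => det_blk4 hk0 L l d r R j
  · rw [Finset.prod_Ico_eq_prod_range, ← Fin.prod_univ_eq_prod_range]
    exact Finset.prod_congr rfl fun j _ => det_blk3 hk0 L l d r R (p + j)
end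

section
/- Let n, k be integers with 1 ≤ k < 2k ≤ n and n+1 = 3k+p where 0 ≤ p < k, and let L, l, d, r, R be complex numbers. Then D_{n+1,k,2k}(L,l,d,r,R) = (d^4 − (3lr + 2LR)d^2 + (2Lr^2 + 2Rl^2)d + L^2R^2 − 2LRlr + l^2r^2)^p · (d^3 − (2lr + LR)d + Lr^2 + Rl^2)^{k−p}. -/
lemma penta_det3 (L l d r R : ℂ) :
    (pentaMat 3 1 (fun _ => L) (fun _ => l) (fun _ => d) (fun _ => r) (fun _ => R)).det =
    d ^ 3 - (2 * l * r + L * R) * d + L * r ^ 2 + R * l ^ 2 := by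
  simp [pentaMat, pentaFun, Matrix.det_fin_three]
  ring

lemma penta_det4 (L l d r R : ℂ) :
    (pentaMat 4 1 (fun _ => L) (fun _ => l) (fun _ => d) (fun _ => r) (fun _ => R)).det =
    d ^ 4 - (3 * l * r + 2 * L * R) * d ^ 2 + (2 * L * r ^ 2 + 2 * R * l ^ 2) * d
      + L ^ 2 * R ^ 2 - 2 * L * R * l * r + l ^ 2 * r ^ 2 := by
  simp [pentaMat, pentaFun, Matrix.det_succ_row_zero, Fin.sum_univ_succ, Fin.succAbove]
  ring

lemma pentaFun_stride (k : ℕ) (hk : 0 < k) (L l d r R : ℂ) (t a b : ℕ) :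
    pentaFun k (fun _ => L) (fun _ => l) (fun _ => d) (fun _ => r) (fun _ => R)
        (t + a * k) (t + b * k)
      = pentaFun 1 (fun _ => L) (fun _ => l) (fun _ => d) (fun _ => r) (fun _ => R) a b := by
  have hmul : ∀ x y : ℕ, x * k = y * k ↔ x = y := by
    intro x y
    constructor
    · exact fun h => Nat.eq_of_mul_eq_mul_right hk h
    · rintro rfl; rfl
  have c1 : (t + b * k + 2 * k = t + a * k) ↔ (b + 2 * 1 = a) := by
    rw [show t + b * k + 2 * k = t + (b + 2) * k from by ring, add_right_inj, hmul]
  have c2 : (t + b * k + k = t + a * k) ↔ (b + 1 = a) := by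
    rw [show t + b * k + k = t + (b + 1) * k from by ring, add_right_inj, hmul]
  have c3 : (t + a * k = t + b * k) ↔ (a = b) := by
    rw [add_right_inj, hmul]
  have c4 : (t + a * k + k = t + b * k) ↔ (a + 1 = b) := by
    rw [show t + a * k + k = t + (a + 1) * k from by ring, add_right_inj, hmul]
  have c5 : (t + a * k + 2 * k = t + b * k) ↔ (a + 2 * 1 = b) := by
    rw [show t + a * k + 2 * k = t + (a + 2) * k from by ring, add_right_inj, hmul]
  simp only [pentaFun, c1, c2, c3, c4, c5]

lemma pentaFun_stride_ne (k : ℕ) (L l d r R : ℂ) (t t' : ℕ) (ht : t < k) (ht' : t' < k)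
    (hne : t ≠ t') (a b : ℕ) :
    pentaFun k (fun _ => L) (fun _ => l) (fun _ => d) (fun _ => r) (fun _ => R)
        (t + a * k) (t' + b * k) = 0 := by
  have key : ∀ x y : ℕ, t + x * k ≠ t' + y * k := by
    intro x y h
    apply hne
    have h2 := congrArg (· % k) h
    simpa [Nat.add_mul_mod_self_right, Nat.mod_eq_of_lt ht, Nat.mod_eq_of_lt ht'] using h2
  have h1 : ¬(t' + b * k + 2 * k = t + a * k) := by
    intro h
    have e2 : t' + (b + 2) * k = t' + b * k + 2 * k := by ring
    exact key a (b + 2) (by omega)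
  have h2 : ¬(t' + b * k + k = t + a * k) := by
    intro h
    have e2 : t' + (b + 1) * k = t' + b * k + k := by ring
    exact key a (b + 1) (by omega)
  have h3 : ¬(t + a * k = t' + b * k) := key a b
  have h4 : ¬(t + a * k + k = t' + b * k) := by
    intro h
    have e2 : t + (a + 1) * k = t + a * k + k := by ring
    exact key (a + 1) b (by omega)
  have h5 : ¬(t + a * k + 2 * k = t' + b * k) := by
    intro h
    have e2 : t + (a + 2) * k = t + a * k + 2 * k := by ring
    exact key (a + 2) b (by omega)
  simp only [pentaFun, if_neg h1, if_neg h2, if_neg h3, if_neg h4, if_neg h5]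

/-- The stride equivalence grouping the indices `0, …, n` by residue mod `k`:
residues `< p` give columns of length `4`, the others columns of length `3`. -/
def strideEquiv (n k p : ℕ) (hk : 1 ≤ k) (hnp : n + 1 = 3 * k + p) (hpk : p < k) :
    (Fin 4 × Fin p) ⊕ (Fin 3 × Fin (k - p)) ≃ Fin (n + 1) where
  toFun x :=
    match x with
    | .inl (j, t) => ⟨↑t + ↑j * k, by
        have ht : (t : ℕ) < p := t.isLt
        have hj : (j : ℕ) < 4 := j.isLt
        have hj3 : (j : ℕ) * k ≤ 3 * k := Nat.mul_le_mul_right k (by omega)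
        omega⟩
    | .inr (j, t) => ⟨p + ↑t + ↑j * k, by
        have ht : (t : ℕ) < k - p := t.isLt
        have hj : (j : ℕ) < 3 := j.isLt
        have hj2 : (j : ℕ) * k ≤ 2 * k := Nat.mul_le_mul_right k (by omega)
        omega⟩
  invFun i :=
    if h : (i : ℕ) % k < p then
      .inl (⟨(i : ℕ) / k, by
        rw [Nat.div_lt_iff_lt_mul hk]
        have := i.isLt
        omega⟩, ⟨(i : ℕ) % k, h⟩)
    else
      .inr (⟨(i : ℕ) / k, by
        rw [Nat.div_lt_iff_lt_mul hk]
        have hi := i.isLt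
        by_contra hc
        push_neg at hc
        have hd := Nat.div_add_mod (i : ℕ) k
        have h3 : 3 ≤ (i : ℕ) / k := (Nat.le_div_iff_mul_le hk).mpr (by omega)
        have h4 : k * 3 ≤ k * ((i : ℕ) / k) := Nat.mul_le_mul_left k h3
        omega⟩, ⟨(i : ℕ) % k - p, by
        have := Nat.mod_lt (i : ℕ) (show 0 < k from hk)
        omega⟩)
  left_inv := by
    rintro (⟨j, t⟩ | ⟨j, t⟩)
    · have ht : (t : ℕ) < k := lt_trans t.isLt hpk
      have h1 : ((t : ℕ) + (j : ℕ) * k) % k = (t : ℕ) := by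
        simp [Nat.add_mul_mod_self_right, Nat.mod_eq_of_lt ht]
      have h2 : ((t : ℕ) + (j : ℕ) * k) / k = (j : ℕ) := by
        rw [Nat.add_mul_div_right _ _ hk, Nat.div_eq_of_lt ht, Nat.zero_add]
      simp only []
      rw [dif_pos (show ((t : ℕ) + (j : ℕ) * k) % k < p from by rw [h1]; exact t.isLt)]
      simp only [Sum.inl.injEq, Prod.mk.injEq, Fin.ext_iff]
      exact ⟨h2, h1⟩
    · have ht : p + (t : ℕ) < k := by have := t.isLt; omega
      have h1 : (p + (t : ℕ) + (j : ℕ) * k) % k = p + (t : ℕ) := by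
        simp [Nat.add_mul_mod_self_right, Nat.mod_eq_of_lt ht]
      have h2 : (p + (t : ℕ) + (j : ℕ) * k) / k = (j : ℕ) := by
        rw [Nat.add_mul_div_right _ _ hk, Nat.div_eq_of_lt ht, Nat.zero_add]
      simp only []
      rw [dif_neg (show ¬((p + (t : ℕ) + (j : ℕ) * k) % k < p) from by rw [h1]; omega)]
      simp only [Sum.inr.injEq, Prod.mk.injEq, Fin.ext_iff]
      exact ⟨h2, by rw [h1]; omega⟩
  right_inv := by
    intro i
    by_cases h : (i : ℕ) % k < p
    · simp only [dif_pos h]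
      exact Fin.ext (Nat.mod_add_div' (i : ℕ) k)
    · simp only [dif_neg h]
      apply Fin.ext
      show p + ((i : ℕ) % k - p) + (i : ℕ) / k * k = (i : ℕ)
      have := Nat.mod_add_div' (i : ℕ) k
      omega

/-- Theorem 8: the determinant of the Toeplitz `k,2k`-pentadiagonal matrix
`A_{n+1,k,2k}(L,l,d,r,R)` for `n + 1 = 3k + p`, `0 ≤ p < k`. -/
theorem det_toeplitz_q_eq_three (n k p : ℕ) (hk : 1 ≤ k) (h2k : 2 * k ≤ n)
    (hnp : n + 1 = 3 * k + p) (hpk : p < k) (L l d r R : ℂ) :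
    (pentaMat (n + 1) k (fun _ => L) (fun _ => l) (fun _ => d)
        (fun _ => r) (fun _ => R)).det =
      (d ^ 4 - (3 * l * r + 2 * L * R) * d ^ 2 + (2 * L * r ^ 2 + 2 * R * l ^ 2) * d
          + L ^ 2 * R ^ 2 - 2 * L * R * l * r + l ^ 2 * r ^ 2) ^ p *
      (d ^ 3 - (2 * l * r + L * R) * d + L * r ^ 2 + R * l ^ 2) ^ (k - p) := by
  rw [← Matrix.det_submatrix_equiv_self (strideEquiv n k p hk hnp hpk)]
  have hblock : (pentaMat (n + 1) k (fun _ => L) (fun _ => l) (fun _ => d)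
      (fun _ => r) (fun _ => R)).submatrix (strideEquiv n k p hk hnp hpk)
        (strideEquiv n k p hk hnp hpk) =
      Matrix.fromBlocks
        (Matrix.blockDiagonal fun _ : Fin p => pentaMat 4 1
          (fun _ => L) (fun _ => l) (fun _ => d) (fun _ => r) (fun _ => R))
        0 0
        (Matrix.blockDiagonal fun _ : Fin (k - p) => pentaMat 3 1
          (fun _ => L) (fun _ => l) (fun _ => d) (fun _ => r) (fun _ => R)) := by
    ext x y
    rcases x with ⟨j, t⟩ | ⟨j, t⟩ <;> rcases y with ⟨j', t'⟩ | ⟨j', t'⟩ <;>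
      simp only [Matrix.submatrix_apply, strideEquiv, Equiv.coe_fn_mk, pentaMat,
        Matrix.of_apply, Matrix.fromBlocks_apply₁₁, Matrix.fromBlocks_apply₁₂,
        Matrix.fromBlocks_apply₂₁, Matrix.fromBlocks_apply₂₂, Matrix.zero_apply]
    · by_cases h : t = t'
      · subst h
        rw [Matrix.blockDiagonal_apply_eq]
        exact pentaFun_stride k hk L l d r R (t : ℕ) (j : ℕ) (j' : ℕ)
      · rw [Matrix.blockDiagonal_apply_ne _ _ _ h]
        exact pentaFun_stride_ne k L l d r R _ _ (lt_trans t.isLt hpk)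
          (lt_trans t'.isLt hpk) (fun hh => h (Fin.ext hh)) _ _
    · exact pentaFun_stride_ne k L l d r R _ _ (lt_trans t.isLt hpk)
        (by have := t'.isLt; omega) (by have := t.isLt; omega) _ _
    · exact pentaFun_stride_ne k L l d r R _ _ (by have := t.isLt; omega)
        (lt_trans t'.isLt hpk) (by have := t'.isLt; omega) _ _
    · by_cases h : t = t'
      · subst h
        rw [Matrix.blockDiagonal_apply_eq]
        exact pentaFun_stride k hk L l d r R (p + (t : ℕ)) (j : ℕ) (j' : ℕ)
      · rw [Matrix.blockDiagonal_apply_ne _ _ _ h]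
        exact pentaFun_stride_ne k L l d r R _ _ (by have := t.isLt; omega)
          (by have := t'.isLt; omega)
          (fun hh => h (Fin.ext (by omega))) _ _
  rw [hblock, Matrix.det_fromBlocks_zero₂₁, Matrix.det_blockDiagonal,
    Matrix.det_blockDiagonal]
  simp only [penta_det3, penta_det4, Finset.prod_const, Finset.card_univ, Fintype.card_fin]
end

section
/- Let n, k be integers with 1 ≤ k < 2k ≤ n and write n+1 = kq+p with 0 ≤ p < k. Then P_σ · A_{n+1,k,2k}(L,l,d,r,R) · P_σ^T equals the block-diagonal direct sum (⊕_{j=0}^{p−1} A^{(j)}_{q+1,1,2}) ⊕ (⊕_{j=p}^{k−1} A^{(j)}_{q,1,2}). -/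
/-- The Egerváry–Szász permutation `σ` of `{0, …, n}` (for `n + 1 = kq + p`, `0 ≤ p < k`):
`σ(s + j(q+1)) = sk + j` for `0 ≤ j ≤ p - 1`, `0 ≤ s ≤ q`, and
`σ(s + p + jq) = sk + j` for `p ≤ j ≤ k - 1`, `0 ≤ s ≤ q - 1`. -/
def sigmaES (k q p i : ℕ) : ℕ :=
  if i < p * (q + 1) then (i % (q + 1)) * k + i / (q + 1)
  else ((i - p * (q + 1)) % q) * k + (p + (i - p * (q + 1)) / q)

/-- The permutation matrix `P_σ`, with `(i,j)` entry `1` if `j = σ(i)` and `0` otherwise. -/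
def Pmat (n k q p : ℕ) : Matrix (Fin (n + 1)) (Fin (n + 1)) ℂ :=
  Matrix.of fun i j => if (j : ℕ) = sigmaES k q p (i : ℕ) then 1 else 0

/-- The index of the diagonal block (of the direct sum
`(⊕_{j<p} A^{(j)}_{q+1,1,2}) ⊕ (⊕_{p ≤ j < k} A^{(j)}_{q,1,2})`) containing position `i`:
the first `p` blocks have size `q + 1`, the remaining ones size `q`. -/
def blockIdx (q p i : ℕ) : ℕ :=
  if i < p * (q + 1) then i / (q + 1) else p + (i - p * (q + 1)) / q

/-- The position of index `i` inside its diagonal block. -/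
def locIdx (q p i : ℕ) : ℕ :=
  if i < p * (q + 1) then i % (q + 1) else (i - p * (q + 1)) % q


lemma aux0 (k a b s t : ℕ) (hs : s < k) (ht : t < k) :
    b * k + t = a * k + s ↔ (b = a ∧ t = s) := by
  have hk : 0 < k := Nat.lt_of_le_of_lt (Nat.zero_le s) hs
  constructor
  · intro h
    have e1 : (b * k + t) % k = t := by
      rw [Nat.add_comm, Nat.add_mul_mod_self_right, Nat.mod_eq_of_lt ht]
    have e2 : (a * k + s) % k = s := by
      rw [Nat.add_comm, Nat.add_mul_mod_self_right, Nat.mod_eq_of_lt hs]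
    have hts : t = s := by rw [← e1, h, e2]
    subst hts
    have : b * k = a * k := by omega
    exact ⟨Nat.eq_of_mul_eq_mul_right hk this, rfl⟩
  · rintro ⟨rfl, rfl⟩; rfl

lemma penta_split (k : ℕ) (L l d r R : ℕ → ℂ) (a b s t : ℕ) (hs : s < k) (ht : t < k) :
    pentaFun k L l d r R (a * k + s) (b * k + t) =
      if s = t then
        pentaFun 1 (fun x => L (s + x * k)) (fun x => l (s + x * k)) (fun x => d (s + x * k))
          (fun x => r (s + x * k)) (fun x => R (s + x * k)) a b
      else 0 := by
  have c1 : (b * k + t + 2 * k = a * k + s) ↔ (b + 2 = a ∧ t = s) := by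
    rw [show b * k + t + 2 * k = (b + 2) * k + t by ring]; exact aux0 k a (b+2) s t hs ht
  have c2 : (b * k + t + k = a * k + s) ↔ (b + 1 = a ∧ t = s) := by
    rw [show b * k + t + k = (b + 1) * k + t by ring]; exact aux0 k a (b+1) s t hs ht
  have c3 : (a * k + s = b * k + t) ↔ (a = b ∧ s = t) := aux0 k b a t s ht hs
  have c4 : (a * k + s + k = b * k + t) ↔ (a + 1 = b ∧ s = t) := by
    rw [show a * k + s + k = (a + 1) * k + s by ring]; exact aux0 k b (a+1) t s ht hs
  have c5 : (a * k + s + 2 * k = b * k + t) ↔ (a + 2 = b ∧ s = t) := by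
    rw [show a * k + s + 2 * k = (a + 2) * k + s by ring]; exact aux0 k b (a+2) t s ht hs
  unfold pentaFun
  by_cases hst : s = t
  · subst hst
    simp only [c1, c2, c3, c4, c5, eq_self_iff_true, and_true, if_true, mul_one]
    rw [Nat.add_comm (b * k) s, Nat.add_comm (a * k) s]
  · have hts : ¬ t = s := fun h => hst h.symm
    simp only [c1, c2, c3, c4, c5, if_neg hst, hst, hts, and_false, if_false]

open Matrix in
/-- Theorem 9 (rearrangement): `P_σ A_{n+1,k,2k}(L,l,d,r,R) P_σᵀ` is the block-diagonal
direct sum `(⊕_{j=0}^{p-1} A^{(j)}_{q+1,1,2}) ⊕ (⊕_{j=p}^{k-1} A^{(j)}_{q,1,2})`, where the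
block `A^{(s)}_{t+1,1,2}` is the `1,2`-pentadiagonal matrix with diagonal vectors sampled
from the original ones in steps of `k` starting at `s` (entrywise formulation: entries in
the same block are given by the corresponding block entry, entries across different blocks
vanish). -/
theorem permuted_penta_eq_blockDiagonal (n k q p : ℕ) (hk : 1 ≤ k) (h2k : 2 * k ≤ n)
    (hqp : n + 1 = k * q + p) (hpk : p < k) (L l d r R : ℕ → ℂ) :
    Pmat n k q p * pentaMat (n + 1) k L l d r R * (Pmat n k q p)ᵀ =
      Matrix.of fun i j : Fin (n + 1) =>
        if blockIdx q p (i : ℕ) = blockIdx q p (j : ℕ) then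
          pentaFun 1
            (fun a => L (blockIdx q p (i : ℕ) + a * k))
            (fun a => l (blockIdx q p (i : ℕ) + a * k))
            (fun a => d (blockIdx q p (i : ℕ) + a * k))
            (fun a => r (blockIdx q p (i : ℕ) + a * k))
            (fun a => R (blockIdx q p (i : ℕ) + a * k))
            (locIdx q p (i : ℕ)) (locIdx q p (j : ℕ))
        else 0 := by
  have hqk : k * q + p = n + 1 := hqp.symm
  have hq : 1 ≤ q := by
    by_contra hq0
    have : q = 0 := by omega
    subst this
    simp at hqp
    omega
  have hblk : ∀ m : ℕ, m < n + 1 → blockIdx q p m < k := by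
    intro m hm
    unfold blockIdx
    split
    · rename_i h
      rw [Nat.mul_comm] at h
      have : m / (q + 1) < p := Nat.div_lt_of_lt_mul h
      omega
    · rename_i h
      have e2 : p * (q + 1) = p * q + p := by ring
      have hle : p * q ≤ k * q := Nat.mul_le_mul_right q (le_of_lt hpk)
      have hlt : m - p * (q + 1) < q * (k - p) := by
        have e3 : q * (k - p) = k * q - p * q := by
          rw [Nat.mul_sub, Nat.mul_comm q k, Nat.mul_comm q p]
        omega
      have : (m - p * (q + 1)) / q < k - p := Nat.div_lt_of_lt_mul hlt
      omega
  have hloc : ∀ m : ℕ, m < n + 1 → locIdx q p m * k + blockIdx q p m < n + 1 := by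
    intro m hm
    unfold locIdx blockIdx
    split
    · rename_i h
      have hp1 : 0 < p := by
        rcases Nat.eq_zero_or_pos p with h0 | h0
        · simp [h0] at h
        · exact h0
      have h1 : m % (q + 1) ≤ q := Nat.le_of_lt_succ (Nat.mod_lt _ (by omega))
      have h2 : (m % (q + 1)) * k ≤ q * k := Nat.mul_le_mul_right k h1
      rw [Nat.mul_comm] at h
      have h3 : m / (q + 1) < p := Nat.div_lt_of_lt_mul h
      have h4 : q * k = k * q := Nat.mul_comm q k
      omega
    · rename_i h
      have h1 : (m - p * (q + 1)) % q < q := Nat.mod_lt _ (by omega)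
      have h2 : ((m - p * (q + 1)) % q) * k ≤ (q - 1) * k := Nat.mul_le_mul_right k (by omega)
      have h3 : (q - 1) * k + k = q * k := by
        have e : q - 1 + 1 = q := by omega
        calc (q - 1) * k + k = (q - 1 + 1) * k := by ring
          _ = q * k := by rw [e]
      have h4 : q * k = k * q := Nat.mul_comm q k
      have hb : blockIdx q p m < k := hblk m hm
      unfold blockIdx at hb
      rw [if_neg h] at hb
      omega
  have hsig : ∀ m : ℕ, sigmaES k q p m = locIdx q p m * k + blockIdx q p m := by
    intro m
    unfold sigmaES locIdx blockIdx
    split_ifs <;> rfl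
  have hlt : ∀ i : Fin (n + 1), sigmaES k q p (i : ℕ) < n + 1 := by
    intro i; rw [hsig]; exact hloc i i.isLt
  set σ' : Fin (n + 1) → Fin (n + 1) := fun i => ⟨sigmaES k q p (i : ℕ), hlt i⟩ with hσ'
  have hP : ∀ i a : Fin (n + 1), Pmat n k q p i a = if a = σ' i then 1 else 0 := by
    intro i a
    simp only [Pmat, Matrix.of_apply, hσ', Fin.ext_iff]
  ext i j
  rw [Matrix.mul_apply]
  simp only [Matrix.mul_apply, Matrix.transpose_apply, hP, ite_mul, one_mul, zero_mul,
    mul_ite, mul_one, mul_zero, Finset.sum_ite_eq', Finset.mem_univ, if_true]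
  show pentaFun k L l d r R (sigmaES k q p (i : ℕ)) (sigmaES k q p (j : ℕ)) = _
  rw [hsig, hsig,
    penta_split k L l d r R _ _ _ _ (hblk (i : ℕ) i.isLt) (hblk (j : ℕ) j.isLt)]
  rfl
end

section
/- Let n, k be integers with 1 ≤ k < 2k ≤ n and write n+1 = kq+p with 0 ≤ p < k. Then D_{n+1,k,2k}(L,l,d,r,R) = ∏_{j=0}^{p−1} D^{(j)}_{q+1,1,2} · ∏_{j=p}^{k−1} D^{(j)}_{q,1,2}, where D^{(s)}_{t+1,1,2} denotes the determinant of A^{(s)}_{t+1,1,2}. -/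
lemma pentaFun_ne_mod (k : ℕ) (L l d r R : ℕ → ℂ) {i j : ℕ} (h : i % k ≠ j % k) :
    pentaFun k L l d r R i j = 0 := by
  unfold pentaFun
  split_ifs with h1 h2 h3 h4 h5
  · exact (h (by rw [← h1, Nat.add_mul_mod_self_right])).elim
  · exact (h (by rw [← h2, Nat.add_mod_right])).elim
  · exact (h (by rw [h3])).elim
  · exact (h (by rw [← h4, Nat.add_mod_right])).elim
  · exact (h (by rw [← h5, Nat.add_mul_mod_self_right])).elim
  · rfl

lemma pentaFun_sample (k : ℕ) (hk0 : 0 < k) (L l d r R : ℕ → ℂ) (j t s : ℕ) :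
    pentaFun k L l d r R (j + t * k) (j + s * k) =
      pentaFun 1 (fun a => L (j + a * k)) (fun a => l (j + a * k)) (fun a => d (j + a * k))
        (fun a => r (j + a * k)) (fun a => R (j + a * k)) t s := by
  have hcan : ∀ x y : ℕ, j + x * k = j + y * k ↔ x = y := by
    intro x y
    constructor
    · intro h
      exact Nat.eq_of_mul_eq_mul_right hk0 (by omega)
    · rintro rfl; rfl
  have h1 : (j + s * k + 2 * k = j + t * k) ↔ (s + 2 = t) := by
    rw [← hcan (s + 2) t, add_mul]; omega
  have h2 : (j + s * k + k = j + t * k) ↔ (s + 1 = t) := by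
    rw [← hcan (s + 1) t, add_mul]; omega
  have h3 : (j + t * k = j + s * k) ↔ (t = s) := hcan t s
  have h4 : (j + t * k + k = j + s * k) ↔ (t + 1 = s) := by
    rw [← hcan (t + 1) s, add_mul]; omega
  have h5 : (j + t * k + 2 * k = j + s * k) ↔ (t + 2 = s) := by
    rw [← hcan (t + 2) s, add_mul]; omega
  simp only [pentaFun, mul_one, h1, h2, h3, h4, h5]

/-- Theorem 10: for `n + 1 = kq + p`, `0 ≤ p < k`, the determinant of the general
`k,2k`-pentadiagonal matrix factors as `∏_{j=0}^{p-1} D^{(j)}_{q+1,1,2} ⬝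
∏_{j=p}^{k-1} D^{(j)}_{q,1,2}`, where `D^{(s)}_{t+1,1,2}` is the determinant of the
`1,2`-pentadiagonal matrix with diagonal vectors sampled from the original ones in steps
of `k` starting at `s`. -/
theorem det_penta_eq_prod_det_blocks (n k q p : ℕ) (hk : 1 ≤ k) (h2k : 2 * k ≤ n)
    (hqp : n + 1 = k * q + p) (hpk : p < k) (L l d r R : ℕ → ℂ) :
    (pentaMat (n + 1) k L l d r R).det =
      (∏ j ∈ Finset.range p,
        (pentaMat (q + 1) 1 (fun a => L (j + a * k)) (fun a => l (j + a * k))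
          (fun a => d (j + a * k)) (fun a => r (j + a * k)) (fun a => R (j + a * k))).det) *
      ∏ j ∈ Finset.Ico p k,
        (pentaMat q 1 (fun a => L (j + a * k)) (fun a => l (j + a * k))
          (fun a => d (j + a * k)) (fun a => r (j + a * k)) (fun a => R (j + a * k))).det := by
  have hk0 : 0 < k := hk
  set b : Fin (n + 1) → Fin k := fun i => ⟨(i : ℕ) % k, Nat.mod_lt _ hk0⟩ with hb
  have hbt : (pentaMat (n + 1) k L l d r R).BlockTriangular b := by
    intro i j hij
    have hne : (i : ℕ) % k ≠ (j : ℕ) % k := by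
      intro h
      exact absurd (Fin.ext h : b i = b j).symm (ne_of_lt hij)
    exact pentaFun_ne_mod k L l d r R hne
  rw [hbt.det_fintype]
  have hfac : ∀ a : Fin k,
      ((pentaMat (n + 1) k L l d r R).toSquareBlock b a).det =
        (pentaMat (if (a : ℕ) < p then q + 1 else q) 1 (fun t => L ((a : ℕ) + t * k))
          (fun t => l ((a : ℕ) + t * k)) (fun t => d ((a : ℕ) + t * k))
          (fun t => r ((a : ℕ) + t * k)) (fun t => R ((a : ℕ) + t * k))).det := by
    intro a
    set m := if (a : ℕ) < p then q + 1 else q with hm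
    have hbound : ∀ t : ℕ, t < m → (a : ℕ) + t * k < n + 1 := by
      intro t ht
      by_cases hap : (a : ℕ) < p
      · rw [hm, if_pos hap] at ht
        have h1 : t * k ≤ q * k := Nat.mul_le_mul_right k (by omega)
        have h2 : q * k = k * q := Nat.mul_comm q k
        omega
      · rw [hm, if_neg hap] at ht
        have h1 : (t + 1) * k ≤ q * k := Nat.mul_le_mul_right k (by omega)
        have h2 : q * k = k * q := Nat.mul_comm q k
        have h3 : (t + 1) * k = t * k + k := by ring
        have h4 : (a : ℕ) < k := a.isLt
        omega
    have hdivlt : ∀ i : Fin (n + 1), (i : ℕ) % k = (a : ℕ) → (i : ℕ) / k < m := by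
      intro i hia
      have hdm := Nat.div_add_mod (i : ℕ) k
      have hi := i.isLt
      by_cases hap : (a : ℕ) < p
      · rw [hm, if_pos hap]
        have hexp : k * (q + 1) = k * q + k := by ring
        have hlt : k * ((i : ℕ) / k) < k * (q + 1) := by omega
        exact Nat.lt_of_mul_lt_mul_left hlt
      · rw [hm, if_neg hap]
        have hlt : k * ((i : ℕ) / k) < k * q := by omega
        exact Nat.lt_of_mul_lt_mul_left hlt
    let e : Fin m ≃ { i : Fin (n + 1) // b i = a } :=
      { toFun := fun t => ⟨⟨(a : ℕ) + t * k, hbound t t.isLt⟩, by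
          apply Fin.ext
          show ((a : ℕ) + t * k) % k = (a : ℕ)
          rw [Nat.add_mul_mod_self_right, Nat.mod_eq_of_lt a.isLt]⟩
        invFun := fun x => ⟨(x.1 : ℕ) / k, hdivlt x.1 (congrArg Fin.val x.2)⟩
        left_inv := fun t => by
          apply Fin.ext
          show ((a : ℕ) + (t : ℕ) * k) / k = (t : ℕ)
          rw [Nat.add_mul_div_right _ _ hk0, Nat.div_eq_of_lt a.isLt, Nat.zero_add]
        right_inv := fun x => by
          apply Subtype.ext
          apply Fin.ext
          show (a : ℕ) + ((x.1 : ℕ) / k) * k = (x.1 : ℕ)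
          have hxa : (x.1 : ℕ) % k = (a : ℕ) := congrArg Fin.val x.2
          conv_rhs => rw [← Nat.mod_add_div' (x.1 : ℕ) k]
          rw [hxa] }
    rw [← Matrix.det_submatrix_equiv_self e]
    congr 1
    ext t s
    show (pentaMat (n + 1) k L l d r R) (e t).1 (e s).1 = _
    have : (pentaMat (n + 1) k L l d r R) (e t).1 (e s).1 =
        pentaFun k L l d r R ((a : ℕ) + (t : ℕ) * k) ((a : ℕ) + (s : ℕ) * k) := rfl
    rw [this, pentaFun_sample k hk0 L l d r R]
    rfl
  rw [Finset.prod_congr rfl fun a _ => hfac a]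
  rw [Fin.prod_univ_eq_prod_range (fun x =>
    (pentaMat (if x < p then q + 1 else q) 1 (fun t => L (x + t * k))
      (fun t => l (x + t * k)) (fun t => d (x + t * k))
      (fun t => r (x + t * k)) (fun t => R (x + t * k))).det) k]
  rw [Finset.range_eq_Ico, ← Finset.prod_Ico_consecutive _ (Nat.zero_le p) (le_of_lt hpk),
    ← Finset.range_eq_Ico]
  congr 1
  · exact Finset.prod_congr rfl fun x hx => by
      rw [if_pos (Finset.mem_range.mp hx)]
  · exact Finset.prod_congr rfl fun x hx => by
      rw [if_neg (by have := (Finset.mem_Ico.mp hx).1; omega)]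
end

section
/- Let n, k be integers with 1 ≤ k < 2k ≤ n, write n+1 = kq+p with 0 ≤ p < k, and let L, l, d, r, R be complex numbers. Then D_{n+1,k,2k}(L,l,d,r,R) = D_{q+1,1,2}(L,l,d,r,R)^p · D_{q,1,2}(L,l,d,r,R)^{k−p}. -/
lemma shift_iff (k a b s s' c : ℕ) (hk : 0 < k) (hs : s < k) (hs' : s' < k) :
    k * b + s' + c * k = k * a + s ↔ (s' = s ∧ b + c = a) := by
  constructor
  · intro h
    have h' : k * (b + c) + s' = k * a + s := by ring_nf; ring_nf at h; omega
    have hm : s' = s := by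
      have := congrArg (· % k) h'
      simpa [Nat.mul_add_mod, Nat.mod_eq_of_lt hs, Nat.mod_eq_of_lt hs'] using this
    have hd : b + c = a := by
      have := congrArg (· / k) h'
      simpa [Nat.mul_add_div hk, Nat.div_eq_of_lt hs, Nat.div_eq_of_lt hs'] using this
    exact ⟨hm, hd⟩
  · rintro ⟨rfl, rfl⟩; ring

lemma eq_iff' (k a b s s' : ℕ) (hk : 0 < k) (hs : s < k) (hs' : s' < k) :
    k * b + s' = k * a + s ↔ (s' = s ∧ b = a) := by
  simpa using shift_iff k a b s s' 0 hk hs hs'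

lemma penta_entry (k : ℕ) (hk : 0 < k) (L l d r R : ℂ) (i j : ℕ) :
    pentaFun k (fun _ => L) (fun _ => l) (fun _ => d) (fun _ => r) (fun _ => R) i j =
      if i % k = j % k then
        pentaFun 1 (fun _ => L) (fun _ => l) (fun _ => d) (fun _ => r) (fun _ => R)
          (i / k) (j / k)
      else 0 := by
  obtain ⟨a, s, hs, rfl⟩ : ∃ a s, s < k ∧ i = k * a + s :=
    ⟨i / k, i % k, Nat.mod_lt _ hk, (Nat.div_add_mod i k).symm⟩
  obtain ⟨b, s', hs', rfl⟩ : ∃ b s', s' < k ∧ j = k * b + s' :=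
    ⟨j / k, j % k, Nat.mod_lt _ hk, (Nat.div_add_mod j k).symm⟩
  have hmodi : (k * a + s) % k = s := by simp [Nat.mul_add_mod, Nat.mod_eq_of_lt hs]
  have hmodj : (k * b + s') % k = s' := by simp [Nat.mul_add_mod, Nat.mod_eq_of_lt hs']
  have hdivi : (k * a + s) / k = a := by simp [Nat.mul_add_div hk, Nat.div_eq_of_lt hs]
  have hdivj : (k * b + s') / k = b := by simp [Nat.mul_add_div hk, Nat.div_eq_of_lt hs']
  rw [hmodi, hmodj, hdivi, hdivj]
  unfold pentaFun
  by_cases hss : s = s'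
  · subst hss
    have e1 : (k * b + s + 2 * k = k * a + s) ↔ (b + 2 = a) := by
      rw [shift_iff k a b s s 2 hk hs hs]; simp
    have e2 : (k * b + s + k = k * a + s) ↔ (b + 1 = a) := by
      have h := shift_iff k a b s s 1 hk hs hs
      rw [one_mul] at h; rw [h]; simp
    have e3 : (k * a + s = k * b + s) ↔ (a = b) := by
      rw [eq_iff' k b a s s hk hs hs]; simp
    have e4 : (k * a + s + k = k * b + s) ↔ (a + 1 = b) := by
      have h := shift_iff k b a s s 1 hk hs hs
      rw [one_mul] at h; rw [h]; simp
    have e5 : (k * a + s + 2 * k = k * b + s) ↔ (a + 2 = b) := by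
      rw [shift_iff k b a s s 2 hk hs hs]; simp
    simp only [e1, e2, e3, e4, e5, mul_one, if_pos rfl, if_true]
  · have n1 : ¬ (k * b + s' + 2 * k = k * a + s) := fun h =>
      hss (((shift_iff k a b s s' 2 hk hs hs').1 h).1.symm)
    have n2 : ¬ (k * b + s' + k = k * a + s) := fun h =>
      hss (((shift_iff k a b s s' 1 hk hs hs').1 (by rwa [one_mul])).1.symm)
    have n3 : ¬ (k * a + s = k * b + s') := fun h =>
      hss ((eq_iff' k b a s' s hk hs' hs).1 h).1
    have n4 : ¬ (k * a + s + k = k * b + s') := fun h =>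
      hss ((shift_iff k b a s' s 1 hk hs' hs).1 (by rwa [one_mul])).1
    have n5 : ¬ (k * a + s + 2 * k = k * b + s') := fun h =>
      hss (((shift_iff k b a s' s 2 hk hs' hs).1 h).1)
    rw [if_neg n1, if_neg n2, if_neg n3, if_neg n4, if_neg n5, if_neg hss]

/-- For `n + 1 = kq + p`, `0 ≤ p < k`, the determinant of the Toeplitz
`k,2k`-pentadiagonal matrix is
`D_{q+1,1,2}(L,l,d,r,R)^p ⬝ D_{q,1,2}(L,l,d,r,R)^{k-p}`. -/
theorem det_toeplitz_penta_eq_pow (n k q p : ℕ) (hk : 1 ≤ k) (h2k : 2 * k ≤ n)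
    (hqp : n + 1 = k * q + p) (hpk : p < k) (L l d r R : ℂ) :
    (pentaMat (n + 1) k (fun _ => L) (fun _ => l) (fun _ => d) (fun _ => r)
        (fun _ => R)).det =
      (pentaMat (q + 1) 1 (fun _ => L) (fun _ => l) (fun _ => d) (fun _ => r)
        (fun _ => R)).det ^ p *
      (pentaMat q 1 (fun _ => L) (fun _ => l) (fun _ => d) (fun _ => r)
        (fun _ => R)).det ^ (k - p) := by
  classical
  have hk0 : 0 < k := hk
  have hbt : (pentaMat (n + 1) k (fun _ => L) (fun _ => l) (fun _ => d) (fun _ => r)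
      (fun _ => R)).BlockTriangular (fun i : Fin (n + 1) => (i : ℕ) % k) := by
    intro i j hij
    have hij' : (j : ℕ) % k < (i : ℕ) % k := hij
    have hne : ¬ ((i : ℕ) % k = (j : ℕ) % k) := by omega
    simp only [pentaMat, Matrix.of_apply]
    rw [penta_entry k hk0, if_neg hne]
  rw [hbt.det]
  have himg : Finset.image (fun i : Fin (n + 1) => (i : ℕ) % k) Finset.univ
      = Finset.range k := by
    ext s
    simp only [Finset.mem_image, Finset.mem_range, Finset.mem_univ, true_and]
    constructor
    · rintro ⟨i, rfl⟩; exact Nat.mod_lt _ hk0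
    · intro hs
      exact ⟨⟨s, by omega⟩, by simp [Nat.mod_eq_of_lt hs]⟩
  rw [himg]
  have hblock : ∀ s ∈ Finset.range k,
      ((pentaMat (n + 1) k (fun _ => L) (fun _ => l) (fun _ => d) (fun _ => r)
        (fun _ => R)).toSquareBlock (fun i : Fin (n + 1) => (i : ℕ) % k) s).det
      = (pentaMat (if s < p then q + 1 else q) 1 (fun _ => L) (fun _ => l) (fun _ => d)
        (fun _ => r) (fun _ => R)).det := by
    intro s hsr
    rw [Finset.mem_range] at hsr
    have hub : ∀ t : Fin (if s < p then q + 1 else q), k * (t : ℕ) + s < n + 1 := by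
      intro t
      rcases lt_or_ge s p with h | h
      · have ht : (t : ℕ) ≤ q := by
          have h1 := t.isLt
          have h2 : (if s < p then q + 1 else q) = q + 1 := if_pos h
          omega
        have := Nat.mul_le_mul_left k ht
        omega
      · have ht : (t : ℕ) + 1 ≤ q := by
          have h1 := t.isLt
          have h2 : (if s < p then q + 1 else q) = q := if_neg (Nat.not_lt.mpr h)
          omega
        have h2 := Nat.mul_le_mul_left k ht
        rw [Nat.mul_add, Nat.mul_one] at h2
        omega
    have hlb : ∀ i : Fin (n + 1), (i : ℕ) % k = s →
        (i : ℕ) / k < if s < p then q + 1 else q := by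
      intro i hi
      have hdm := Nat.div_add_mod (i : ℕ) k
      have hilt := i.isLt
      rcases lt_or_ge s p with h | h
      · rw [if_pos h]
        by_contra hc
        push_neg at hc
        have h2 := Nat.mul_le_mul_left k hc
        rw [Nat.mul_add, Nat.mul_one] at h2
        omega
      · rw [if_neg (Nat.not_lt.mpr h)]
        by_contra hc
        push_neg at hc
        have h2 := Nat.mul_le_mul_left k hc
        omega
    let e : Fin (if s < p then q + 1 else q) ≃ {i : Fin (n + 1) // (i : ℕ) % k = s} :=
      { toFun := fun t => ⟨⟨k * (t : ℕ) + s, hub t⟩, by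
          simp [Nat.mul_add_mod, Nat.mod_eq_of_lt hsr]⟩
        invFun := fun i => ⟨(i.1 : ℕ) / k, hlb i.1 i.2⟩
        left_inv := fun t => by
          apply Fin.ext
          simp [Nat.mul_add_div hk0, Nat.div_eq_of_lt hsr]
        right_inv := fun i => by
          apply Subtype.ext
          apply Fin.ext
          have hdm := Nat.div_add_mod (i.1 : ℕ) k
          have h2 := i.2
          simp only [Fin.val_mk]
          omega }
    have hmat : (pentaMat (n + 1) k (fun _ => L) (fun _ => l) (fun _ => d) (fun _ => r)
          (fun _ => R)).toSquareBlock (fun i : Fin (n + 1) => (i : ℕ) % k) s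
        = Matrix.reindex e e (pentaMat (if s < p then q + 1 else q) 1 (fun _ => L)
            (fun _ => l) (fun _ => d) (fun _ => r) (fun _ => R)) := by
      ext i j
      obtain ⟨i, hi⟩ := i
      obtain ⟨j, hj⟩ := j
      simp only [Matrix.toSquareBlock_def, Matrix.reindex_apply, Matrix.submatrix_apply,
        Matrix.of_apply, pentaMat]
      rw [penta_entry k hk0, if_pos (hi.trans hj.symm)]
      rfl
    rw [hmat, Matrix.det_reindex_self]
  rw [Finset.prod_congr rfl hblock]
  rw [← Finset.prod_range_mul_prod_Ico _ hpk.le]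
  congr 1
  · rw [Finset.prod_congr rfl (fun s hs => by
      rw [if_pos (Finset.mem_range.mp hs)]), Finset.prod_const, Finset.card_range]
  · rw [Finset.prod_congr rfl (g := fun _ => (pentaMat q 1 (fun _ => L) (fun _ => l)
        (fun _ => d) (fun _ => r) (fun _ => R)).det) (fun s hs => by
      rw [if_neg (Nat.not_lt.mpr (Finset.mem_Ico.mp hs).1)]), Finset.prod_const,
      Nat.card_Ico]
end
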